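/- arXiv:2208.04103 — 2 statements merged into one kernel-verified Lean document; each statement's English description precedes it below -/
import Mathlib

section
/- Let c = pπ/q with 0 < p/q < 1/2, δ₀ = sin c, and m a positive integer with 2(m+1)p/q an even integer. Define g(φ, δ) = sin φ − sin(φ + 2(m+1) arcsin(δ sin φ)). Then g(π/2, δ₀) = 0, ∂g/∂φ(π/2, δ₀) = 0, ∂²g/∂φ²(π/2, δ₀) = 0, and ∂³g/∂φ³(π/2, δ₀) ≠ 0, while ∂²g/(∂φ∂δ)(π/2, δ₀) ≠ 0. -/
/-!
Write `F φ = φ + A arcsin (δ sin φ)` with `A = 2(m+1)`, so that `g = sin φ - sin (F φ)` and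
`∂g/∂φ = cos φ - cos F · F'`, `∂²g/∂φ² = -sin φ + sin F · F'² - cos F · F''`, and
`∂³g/∂φ³ = -cos φ + cos F · (F'³ - F''') + 3 sin F · F' F''`.
At `φ = π/2` we have `F' = 1` and `F = π/2 + A arcsin δ₀ = π/2 + A c = π/2 + kπ` with `k` even,
so `sin F = 1` and `cos F = 0`: the first three quantities vanish, while the third derivative is
`3 F''(π/2) = -3Aδ₀/√(1 - δ₀²) ≠ 0`. For the mixed derivative, `∂g/∂φ(π/2, δ) = sin (A arcsin δ)`
for all `|δ| < 1`, whose `δ`-derivative at `δ₀` is `A cos (kπ)/√(1 - δ₀²) = A/√(1 - δ₀²) ≠ 0`.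
-/

open Real

section SinSubSinComp

variable {F F' F'' : ℝ → ℝ}

theorem deriv_sin_sub_sin_comp (hF : ∀ x, HasDerivAt F (F' x) x) :
    deriv (fun x => sin x - sin (F x)) = fun x => cos x - cos (F x) * F' x :=
  funext fun x => ((hasDerivAt_sin x).sub ((hasDerivAt_sin (F x)).comp x (hF x))).deriv

theorem iteratedDeriv_two_sin_sub_sin_comp (hF : ∀ x, HasDerivAt F (F' x) x)
    (hF' : ∀ x, HasDerivAt F' (F'' x) x) :
    iteratedDeriv 2 (fun x => sin x - sin (F x)) =
      fun x => -sin x + sin (F x) * F' x ^ 2 - cos (F x) * F'' x := by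
  rw [iteratedDeriv_succ, iteratedDeriv_one, deriv_sin_sub_sin_comp hF]
  funext x
  refine ((hasDerivAt_cos x).sub
    (((hasDerivAt_cos (F x)).comp x (hF x)).mul (hF' x))).deriv.trans ?_
  simp only [Function.comp_apply]
  ring

theorem iteratedDeriv_three_sin_sub_sin_comp_of_cos_eq_zero (hF : ∀ x, HasDerivAt F (F' x) x)
    (hF' : ∀ x, HasDerivAt F' (F'' x) x) {x : ℝ} (hF'' : DifferentiableAt ℝ F'' x)
    (hcos : cos (F x) = 0) :
    iteratedDeriv 3 (fun x => sin x - sin (F x)) x = -cos x + 3 * sin (F x) * F' x * F'' x := by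
  rw [iteratedDeriv_succ, iteratedDeriv_two_sin_sub_sin_comp hF hF']
  have hsin := (hasDerivAt_sin (F x)).comp x (hF x)
  have hcos' := (hasDerivAt_cos (F x)).comp x (hF x)
  refine (((hasDerivAt_sin x).neg.add (hsin.mul ((hF' x).pow 2))).sub
    (hcos'.mul hF''.hasDerivAt)).deriv.trans ?_
  simp only [Function.comp_apply, hcos]
  ring

end SinSubSinComp

section ShiftedAngle

variable {A δ : ℝ}

noncomputable def shiftedAngle (A δ φ : ℝ) : ℝ := φ + A * arcsin (δ * sin φ)

noncomputable def arcsinRadical (δ φ : ℝ) : ℝ := √(1 - (δ * sin φ) ^ 2)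

theorem one_sub_sq_mul_sin_pos (hδ : δ ^ 2 < 1) (φ : ℝ) : 0 < 1 - (δ * sin φ) ^ 2 := by
  nlinarith [sin_sq_le_one φ, sq_nonneg δ, mul_pow δ (sin φ) 2]

theorem arcsinRadical_pos (hδ : δ ^ 2 < 1) (φ : ℝ) : 0 < arcsinRadical δ φ :=
  sqrt_pos.2 (one_sub_sq_mul_sin_pos hδ φ)

theorem arcsinRadical_sq (hδ : δ ^ 2 < 1) (φ : ℝ) :
    arcsinRadical δ φ ^ 2 = 1 - (δ * sin φ) ^ 2 :=
  sq_sqrt (one_sub_sq_mul_sin_pos hδ φ).le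

theorem hasDerivAt_arcsinRadical (hδ : δ ^ 2 < 1) (φ : ℝ) :
    HasDerivAt (arcsinRadical δ) (-(δ ^ 2 * sin φ * cos φ) / arcsinRadical δ φ) φ := by
  have h := (((hasDerivAt_sin φ).const_mul δ).pow 2).const_sub 1
  refine ((hasDerivAt_sqrt (one_sub_sq_mul_sin_pos hδ φ).ne').comp φ h).congr_deriv ?_
  have := arcsinRadical_pos hδ φ
  simp only [arcsinRadical] at this ⊢
  field_simp
  push_cast
  ring

theorem hasDerivAt_shiftedAngle (hδ : δ ^ 2 < 1) (φ : ℝ) :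
    HasDerivAt (shiftedAngle A δ) (1 + A * (δ * cos φ / arcsinRadical δ φ)) φ := by
  have hne : 0 < 1 - (δ * sin φ) ^ 2 := one_sub_sq_mul_sin_pos hδ φ
  have harcsin := (hasDerivAt_arcsin (by nlinarith) (by nlinarith)).comp φ
    ((hasDerivAt_sin φ).const_mul δ)
  refine ((hasDerivAt_id φ).add (harcsin.const_mul A)).congr_deriv ?_
  simp only [arcsinRadical]
  field_simp

theorem hasDerivAt_shiftedAngle_deriv (hδ : δ ^ 2 < 1) (φ : ℝ) :
    HasDerivAt (fun φ => 1 + A * (δ * cos φ / arcsinRadical δ φ))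
      (A * δ * (δ ^ 2 - 1) * sin φ / arcsinRadical δ φ ^ 3) φ := by
  have hr := arcsinRadical_pos hδ φ
  refine (((((hasDerivAt_cos φ).const_mul δ).div (hasDerivAt_arcsinRadical hδ φ)
    hr.ne').const_mul A).const_add 1).congr_deriv ?_
  field_simp
  linear_combination (-(A * δ * sin φ)) * arcsinRadical_sq hδ φ +
    (A * δ ^ 3 * sin φ) * sin_sq_add_cos_sq φ

theorem differentiable_shiftedAngle_deriv_two (hδ : δ ^ 2 < 1) :
    Differentiable ℝ (fun φ => A * δ * (δ ^ 2 - 1) * sin φ / arcsinRadical δ φ ^ 3) := fun φ =>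
  ((differentiableAt_sin).const_mul _).div
    ((hasDerivAt_arcsinRadical hδ φ).differentiableAt.pow 3) (pow_pos (arcsinRadical_pos hδ φ) 3).ne'

end ShiftedAngle

section PiDivTwo

variable {A δ : ℝ}

theorem shiftedAngle_pi_div_two : shiftedAngle A δ (π / 2) = A * arcsin δ + π / 2 := by
  simp [shiftedAngle, add_comm]

theorem deriv_sin_sub_sin_shiftedAngle_pi_div_two (hδ : δ ^ 2 < 1) :
    deriv (fun φ => sin φ - sin (shiftedAngle A δ φ)) (π / 2) = sin (A * arcsin δ) := by
  rw [deriv_sin_sub_sin_comp (hasDerivAt_shiftedAngle hδ)]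
  simp [shiftedAngle_pi_div_two, cos_add_pi_div_two]

theorem hasDerivAt_deriv_sin_sub_sin_shiftedAngle_pi_div_two (hδ : δ ^ 2 < 1) :
    HasDerivAt (fun δ => deriv (fun φ => sin φ - sin (shiftedAngle A δ φ)) (π / 2))
      (cos (A * arcsin δ) * (A * (1 / √(1 - δ ^ 2)))) δ := by
  have hev : (fun δ => deriv (fun φ => sin φ - sin (shiftedAngle A δ φ)) (π / 2)) =ᶠ[nhds δ]
      fun δ => sin (A * arcsin δ) := by
    filter_upwards [(isOpen_lt (continuous_pow 2) continuous_const).mem_nhds hδ] with ε hε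
    exact deriv_sin_sub_sin_shiftedAngle_pi_div_two hε
  exact ((hasDerivAt_arcsin (by nlinarith) (by nlinarith)).const_mul A).sin.congr_of_eventuallyEq hev

theorem sin_shiftedAngle_pi_div_two (hres : cos (A * arcsin δ) = 1) :
    sin (shiftedAngle A δ (π / 2)) = 1 := by
  rw [shiftedAngle_pi_div_two, sin_add_pi_div_two, hres]

theorem cos_shiftedAngle_pi_div_two (hres : cos (A * arcsin δ) = 1) :
    cos (shiftedAngle A δ (π / 2)) = 0 := by
  rw [shiftedAngle_pi_div_two, cos_add_pi_div_two, sin_eq_zero_iff_cos_eq.2 (Or.inl hres), neg_zero]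

theorem iteratedDeriv_two_sin_sub_sin_shiftedAngle_pi_div_two (hδ : δ ^ 2 < 1)
    (hres : cos (A * arcsin δ) = 1) :
    iteratedDeriv 2 (fun φ => sin φ - sin (shiftedAngle A δ φ)) (π / 2) = 0 := by
  rw [iteratedDeriv_two_sin_sub_sin_comp (hasDerivAt_shiftedAngle hδ)
    (hasDerivAt_shiftedAngle_deriv hδ)]
  simp [sin_shiftedAngle_pi_div_two hres, cos_shiftedAngle_pi_div_two hres]

theorem iteratedDeriv_three_sin_sub_sin_shiftedAngle_pi_div_two (hδ : δ ^ 2 < 1)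
    (hres : cos (A * arcsin δ) = 1) :
    iteratedDeriv 3 (fun φ => sin φ - sin (shiftedAngle A δ φ)) (π / 2) =
      -(3 * A * δ / √(1 - δ ^ 2)) := by
  rw [iteratedDeriv_three_sin_sub_sin_comp_of_cos_eq_zero (hasDerivAt_shiftedAngle hδ)
    (hasDerivAt_shiftedAngle_deriv hδ) (differentiable_shiftedAngle_deriv_two hδ _)
    (cos_shiftedAngle_pi_div_two hres)]
  have hr : 0 < √(1 - δ ^ 2) := sqrt_pos.2 (by linarith)
  simp [sin_shiftedAngle_pi_div_two hres, arcsinRadical]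
  field_simp
  rw [sq_sqrt (by linarith)]
  ring

end PiDivTwo

section Resonance

variable {p q : ℕ}

theorem mul_pi_div_lt_pi_div_two (hpq : 2 * p < q) : p * π / q < π / 2 := by
  have hq : (0 : ℝ) < q := by exact_mod_cast (show 0 < q by omega)
  rw [div_lt_div_iff₀ hq two_pos]
  nlinarith [mul_lt_mul_of_pos_left (by exact_mod_cast hpq : (2 * p : ℝ) < q) pi_pos]

theorem sin_mul_pi_div_mem_Ioo (hp : 0 < p) (hpq : 2 * p < q) : sin (p * π / q) ∈ Set.Ioo 0 1 := by
  have hq : (0 : ℝ) < q := by exact_mod_cast (show 0 < q by omega)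
  have hc0 : 0 < p * π / q := by positivity
  have hc := mul_pi_div_lt_pi_div_two hpq
  refine ⟨sin_pos_of_pos_of_lt_pi hc0 (by linarith [pi_pos]), ?_⟩
  simpa using sin_lt_sin_of_lt_of_le_pi_div_two (by linarith) le_rfl hc

theorem cos_mul_arcsin_sin_mul_pi_div {A : ℝ} {k : ℕ} (hpq : 2 * p < q) (hk : A * p = k * q)
    (heven : Even k) : cos (A * arcsin (sin (p * π / q))) = 1 := by
  have hq : (q : ℝ) ≠ 0 := by exact_mod_cast (show q ≠ 0 by omega)
  have hc0 : 0 ≤ p * π / q := by positivity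
  have hAc : A * (p * π / q) = k * π := by
    field_simp
    linear_combination hk
  rw [arcsin_sin (by linarith [pi_pos]) (mul_pi_div_lt_pi_div_two hpq).le, hAc, cos_nat_mul_pi,
    heven.neg_one_pow]

end Resonance

theorem stmt3_general (p q m : ℕ) (hp : 0 < p) (hpq : 2 * p < q)
    (hint : ∃ k : ℕ, 2 * (m + 1) * p = k * q ∧ Even k) :
    let c : ℝ := p * π / q
    let δ₀ : ℝ := Real.sin c
    let g : ℝ → ℝ → ℝ := fun φ δ =>
      Real.sin φ - Real.sin (φ + 2 * (m + 1) * Real.arcsin (δ * Real.sin φ))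
    g (π / 2) δ₀ = 0 ∧
      deriv (fun φ => g φ δ₀) (π / 2) = 0 ∧
      iteratedDeriv 2 (fun φ => g φ δ₀) (π / 2) = 0 ∧
      iteratedDeriv 3 (fun φ => g φ δ₀) (π / 2) ≠ 0 ∧
      deriv (fun δ => deriv (fun φ => g φ δ) (π / 2)) δ₀ ≠ 0 := by
  intro c δ₀ g
  obtain ⟨k, hk, heven⟩ := hint
  set A : ℝ := 2 * (m + 1) with hA_def
  obtain ⟨hδ₀, hδ₁⟩ := sin_mul_pi_div_mem_Ioo hp hpq
  have hδ : δ₀ ^ 2 < 1 := by nlinarith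
  have hAk : A * p = k * q := by rw [hA_def]; exact_mod_cast hk
  have hres : cos (A * arcsin δ₀) = 1 := cos_mul_arcsin_sin_mul_pi_div hpq hAk heven
  have hsin : sin (A * arcsin δ₀) = 0 := sin_eq_zero_iff_cos_eq.2 (Or.inl hres)
  have hr : 0 < √(1 - δ₀ ^ 2) := sqrt_pos.2 (by linarith)
  have hg : g = fun φ δ => sin φ - sin (shiftedAngle A δ φ) := rfl
  simp only [hg]
  refine ⟨?_, ?_, ?_, ?_, ?_⟩
  · rw [sin_shiftedAngle_pi_div_two hres, sin_pi_div_two, sub_self]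
  · exact (deriv_sin_sub_sin_shiftedAngle_pi_div_two hδ).trans hsin
  · exact iteratedDeriv_two_sin_sub_sin_shiftedAngle_pi_div_two hδ hres
  · rw [iteratedDeriv_three_sin_sub_sin_shiftedAngle_pi_div_two hδ hres, neg_ne_zero]
    positivity
  · rw [(hasDerivAt_deriv_sin_sub_sin_shiftedAngle_pi_div_two hδ).deriv, hres]
    positivity

theorem stmt3 (p q m : ℕ) (hp : 0 < p) (hpq : 2 * p < q) (hm : 0 < m)
    (hint : ∃ k : ℕ, 2 * (m + 1) * p = k * q ∧ Even k) :
    let c : ℝ := p * π / q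
    let δ₀ : ℝ := Real.sin c
    let g : ℝ → ℝ → ℝ := fun φ δ =>
      Real.sin φ - Real.sin (φ + 2 * (m + 1) * Real.arcsin (δ * Real.sin φ))
    g (π / 2) δ₀ = 0 ∧
      deriv (fun φ => g φ δ₀) (π / 2) = 0 ∧
      iteratedDeriv 2 (fun φ => g φ δ₀) (π / 2) = 0 ∧
      iteratedDeriv 3 (fun φ => g φ δ₀) (π / 2) ≠ 0 ∧
      deriv (fun δ => deriv (fun φ => g φ δ) (π / 2)) δ₀ ≠ 0 :=
  stmt3_general p q m hp hpq hint
end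

section
/- Let p, q, m be positive integers with q | (m+1)p and 0 < p/q < 1/2, and let δ₀ = sin(pπ/q). For φ near π/2 and δ = δ₀, the equation sin φ = sin(φ + 2(m+1) arcsin(δ₀ sin φ)) holds if and only if φ = π/2 (in a sufficiently small neighborhood of π/2); i.e., for δ = δ₀ the tangency equation has the unique local solution φ = π/2. -/
open Real

lemma one_sub_cos_le_half_sq' (x : ℝ) : 1 - Real.cos x ≤ x ^ 2 / 2 := by
  have h1 : Real.cos (x / 2) ^ 2 = 1 / 2 + Real.cos x / 2 := by
    have := Real.cos_sq (x / 2)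
    rwa [show 2 * (x / 2) = x by ring] at this
  have h2 : Real.sin (x / 2) ^ 2 + Real.cos (x / 2) ^ 2 = 1 := Real.sin_sq_add_cos_sq _
  have h3 : Real.sin (x / 2) ^ 2 ≤ (x / 2) ^ 2 := Real.sin_sq_le_sq
  nlinarith

lemma arcsin_diff_bound (d s : ℝ) (hd0 : 0 < d) (hd1 : d < 1) (hs1 : -1 ≤ s) (hs2 : s ≤ 1) :
    0 ≤ Real.arcsin d - Real.arcsin (d * s) ∧
      Real.arcsin d - Real.arcsin (d * s) ≤ d / Real.sqrt (1 - d ^ 2) * (1 - s) := by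
  have hds : d * s ≤ d := by nlinarith
  have hmono : Real.arcsin (d * s) ≤ Real.arcsin d := Real.monotone_arcsin hds
  refine ⟨by linarith, ?_⟩
  rcases eq_or_lt_of_le hs2 with rfl | hs2'
  · simp
  have hlt : d * s < d := by nlinarith
  have hsqpos : 0 < Real.sqrt (1 - d ^ 2) := Real.sqrt_pos.2 (by nlinarith)
  obtain ⟨c, hc, hceq⟩ := exists_hasDerivAt_eq_slope Real.arcsin
    (fun x => 1 / Real.sqrt (1 - x ^ 2)) hlt Real.continuous_arcsin.continuousOn
    (fun x hx => by
      refine Real.hasDerivAt_arcsin ?_ ?_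
      · nlinarith [hx.1]
      · nlinarith [hx.2])
  have hcd : -d < c ∧ c < d := ⟨by nlinarith [hc.1], hc.2⟩
  have hc2 : c ^ 2 < d ^ 2 := by nlinarith [hcd.1, hcd.2]
  have hsqc : Real.sqrt (1 - d ^ 2) ≤ Real.sqrt (1 - c ^ 2) :=
    Real.sqrt_le_sqrt (by nlinarith)
  have hsqcpos : 0 < Real.sqrt (1 - c ^ 2) := lt_of_lt_of_le hsqpos hsqc
  have key : Real.arcsin d - Real.arcsin (d * s) = 1 / Real.sqrt (1 - c ^ 2) * (d - d * s) := by
    rw [hceq, div_mul_cancel₀ _ (sub_ne_zero.2 hlt.ne')]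
  rw [key]
  have h1 : 1 / Real.sqrt (1 - c ^ 2) ≤ 1 / Real.sqrt (1 - d ^ 2) :=
    one_div_le_one_div_of_le hsqpos hsqc
  have h2 : (0:ℝ) ≤ d - d * s := by linarith
  calc 1 / Real.sqrt (1 - c ^ 2) * (d - d * s) ≤ 1 / Real.sqrt (1 - d ^ 2) * (d - d * s) := by
        nlinarith
    _ = d / Real.sqrt (1 - d ^ 2) * (1 - s) := by ring

lemma int_pin (n k : ℤ) (r : ℝ) (h : (n : ℝ) * π = (k : ℝ) * π + r) (hr : |r| < π) :
    n = k := by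
  by_contra hne
  have h1 : (1:ℝ) ≤ |((n - k : ℤ) : ℝ)| := by
    exact_mod_cast Int.one_le_abs (sub_ne_zero.2 hne)
  have h2 : ((n - k : ℤ) : ℝ) * π = r := by push_cast; linarith
  have h3 : π ≤ |r| := by
    rw [← h2, abs_mul, abs_of_pos pi_pos]
    nlinarith [pi_pos]
  linarith

set_option maxHeartbeats 1000000 in
/-- At the bifurcation value `δ = δ₀` the tangency equation has `φ = π/2` as its unique
solution in a sufficiently small neighborhood of `π/2`. -/
theorem stmt11 (p q m : ℕ) (hp : 0 < p) (hq : 0 < q) (hm : 0 < m)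
    (hdiv : q ∣ (m + 1) * p) (hpq : 2 * p < q) :
    let δ₀ : ℝ := Real.sin (p * π / q)
    ∃ ε > 0, ∀ φ : ℝ, |φ - π / 2| < ε →
      (Real.sin φ = Real.sin (φ + 2 * (m + 1) * Real.arcsin (δ₀ * Real.sin φ)) ↔
        φ = π / 2) := by
  intro δ₀
  obtain ⟨k, hk⟩ := hdiv
  have hqR : (0:ℝ) < (q:ℝ) := by exact_mod_cast hq
  have hpR : (0:ℝ) < (p:ℝ) := by exact_mod_cast hp
  have hpqR : 2 * (p:ℝ) < (q:ℝ) := by exact_mod_cast hpq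
  set θ : ℝ := (p:ℝ) * π / (q:ℝ) with hθdef
  have hδeq : δ₀ = Real.sin θ := rfl
  have hθpos : 0 < θ := by positivity
  have hθlt : θ < π / 2 := by
    rw [hθdef, div_lt_iff₀ hqR]
    have h := mul_lt_mul_of_pos_left hpqR pi_pos
    nlinarith [h]
  have hδpos : 0 < δ₀ := by
    rw [hδeq]
    exact Real.sin_pos_of_pos_of_lt_pi hθpos (by linarith [pi_pos])
  have hδlt : δ₀ < 1 := by
    have hcos : 0 < Real.cos θ := Real.cos_pos_of_mem_Ioo ⟨by linarith, hθlt⟩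
    have hsq := Real.sin_sq_add_cos_sq θ
    rw [hδeq]
    rcases eq_or_lt_of_le (Real.sin_le_one θ) with h | h
    · exfalso
      rw [← h] at hsq
      have hc2 : Real.cos θ ^ 2 = 0 := by nlinarith [hsq]
      have : Real.cos θ = 0 := by
        have := sq_eq_zero_iff.1 hc2
        exact this
      linarith
    · exact h
  have harc : Real.arcsin δ₀ = θ := by
    rw [hδeq]
    exact Real.arcsin_sin (by linarith) hθlt.le
  have hkR : ((m:ℝ) + 1) * θ = (k:ℝ) * π := by
    have hc : ((m:ℝ) + 1) * (p:ℝ) = (q:ℝ) * (k:ℝ) := by exact_mod_cast hk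
    rw [hθdef, show ((m:ℝ) + 1) * ((p:ℝ) * π / (q:ℝ)) = ((m:ℝ) + 1) * (p:ℝ) * π / (q:ℝ) from by
      ring, hc]
    field_simp
  set M : ℝ := (m:ℝ) + 1 with hMdef
  have hM0 : 0 < M := by positivity
  set L : ℝ := δ₀ / Real.sqrt (1 - δ₀ ^ 2) with hLdef
  have hL0 : 0 ≤ L := by positivity
  set C : ℝ := M * L with hCdef
  have hC0 : 0 ≤ C := by positivity
  set ε : ℝ := min (π / 4) (1 / (C + 1)) with hεdef
  have hε0 : 0 < ε := lt_min (by positivity) (by positivity)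
  have hε4 : ε ≤ π / 4 := min_le_left _ _
  have hεC : C * ε ≤ 1 := by
    have h1 : ε ≤ 1 / (C + 1) := min_le_right _ _
    have h2 : 0 < C + 1 := by linarith
    rw [le_div_iff₀ h2] at h1
    have h3 : ε * (C + 1) = ε * C + ε := by ring
    have h4 : C * ε = ε * C := by ring
    linarith
  clear_value δ₀ θ M L C ε
  refine ⟨ε, hε0, fun φ hφ => ?_⟩
  set t : ℝ := φ - π / 2 with htdef
  -- key bounds
  obtain ⟨hD0, hD1⟩ := arcsin_diff_bound δ₀ (Real.sin φ) hδpos hδlt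
    (Real.neg_one_le_sin φ) (Real.sin_le_one φ)
  rw [harc] at hD0 hD1
  rw [← hLdef] at hD1
  set A : ℝ := Real.arcsin (δ₀ * Real.sin φ) with hAdef
  clear_value t A
  have hcosb : 1 - Real.sin φ ≤ t ^ 2 / 2 := by
    have h1 := one_sub_cos_le_half_sq' (π / 2 - φ)
    rw [Real.cos_pi_div_two_sub] at h1
    have h2 : (π / 2 - φ) ^ 2 = t ^ 2 := by rw [htdef]; ring
    linarith
  have ht2 : t ^ 2 ≤ ε * |t| := by
    have h1 : |t| * |t| ≤ ε * |t| := mul_le_mul_of_nonneg_right hφ.le (abs_nonneg t)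
    have h2 : t ^ 2 = |t| * |t| := by rw [← sq_abs t]; ring
    linarith
  have hKB1 : M * (θ - A) ≤ |t| / 2 := by
    have e1 : θ - A ≤ L * (t ^ 2 / 2) := by
      have := mul_le_mul_of_nonneg_left hcosb hL0
      linarith
    have e2 : M * (θ - A) ≤ M * (L * (t ^ 2 / 2)) := mul_le_mul_of_nonneg_left e1 hM0.le
    have e3 : M * (L * (t ^ 2 / 2)) = C * t ^ 2 / 2 := by rw [hCdef]; ring
    have e4 : C * t ^ 2 ≤ C * (ε * |t|) := mul_le_mul_of_nonneg_left ht2 hC0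
    have e5 : C * (ε * |t|) = C * ε * |t| := by ring
    have e6 : C * ε * |t| ≤ 1 * |t| := mul_le_mul_of_nonneg_right hεC (abs_nonneg t)
    have e7 : (1:ℝ) * |t| = |t| := one_mul _
    linarith
  have hKB2 : M * (θ - A) ≤ π / 8 := by
    have : |t| / 2 ≤ ε / 2 := by linarith [hφ.le]
    linarith
  have hMD0 : 0 ≤ M * (θ - A) := mul_nonneg hM0.le hD0
  constructor
  · -- forward: equation implies φ = π/2
    intro heq
    have hfac : Real.sin (-(M * A)) * Real.cos (φ + M * A) = 0 := by
      have h0 : Real.sin φ - Real.sin (φ + 2 * M * A) = 0 := sub_eq_zero_of_eq heq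
      rw [Real.sin_sub_sin] at h0
      have h2 : (φ - (φ + 2 * M * A)) / 2 = -(M * A) := by ring
      have h3 : (φ + (φ + 2 * M * A)) / 2 = φ + M * A := by ring
      rw [h2, h3] at h0
      linarith
    rcases mul_eq_zero.1 hfac with hs | hc
    · -- sin(M A) = 0 case
      rw [Real.sin_neg, neg_eq_zero] at hs
      obtain ⟨n, hn⟩ := Real.sin_eq_zero_iff.1 hs
      have hexp : M * (θ - A) = M * θ - M * A := by ring
      have hn' : (n:ℝ) * π = (k:ℝ) * π + (-(M * (θ - A))) := by
        rw [hn]; linarith [hkR]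
      have hnk : n = k := by
        refine int_pin n k _ hn' ?_
        rw [abs_neg, abs_of_nonneg hMD0]
        linarith [pi_gt_three]
      rw [hnk] at hn'
      push_cast at hn'
      have hθA : θ = A := by
        have h4 : M * (θ - A) = 0 := by linarith
        rcases mul_eq_zero.1 h4 with h5 | h5
        · exact absurd h5 hM0.ne'
        · linarith
      have hsA : Real.sin A = δ₀ * Real.sin φ := by
        rw [hAdef]
        refine Real.sin_arcsin ?_ ?_
        · have b1 : δ₀ * (-1) ≤ δ₀ * Real.sin φ :=
            mul_le_mul_of_nonneg_left (Real.neg_one_le_sin φ) hδpos.le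
          linarith
        · have b2 : δ₀ * Real.sin φ ≤ δ₀ * 1 :=
            mul_le_mul_of_nonneg_left (Real.sin_le_one φ) hδpos.le
          linarith
      have hδsin : δ₀ * Real.sin φ = δ₀ := by
        rw [← hsA, ← hθA, ← hδeq]
      have hsφ : Real.sin φ = 1 := by
        have := mul_left_cancel₀ hδpos.ne' (by linarith [hδsin] : δ₀ * Real.sin φ = δ₀ * 1)
        linarith
      have hc1 : Real.cos (π / 2 - φ) = 1 := by
        rw [Real.cos_pi_div_two_sub, hsφ]
      obtain ⟨n2, hn2⟩ := (Real.cos_eq_one_iff _).1 hc1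
      have hn20 : n2 = 0 := by
        by_contra h0
        have h1 : (1:ℝ) ≤ |(n2:ℝ)| := by exact_mod_cast Int.one_le_abs h0
        have h2 : |π / 2 - φ| < ε := by rw [abs_sub_comm, ← htdef]; exact hφ
        rw [← hn2, abs_mul] at h2
        have h3 : |(2:ℝ) * π| = 2 * π := abs_of_pos (by positivity)
        rw [h3] at h2
        have h4 : (2:ℝ) * π ≤ |(n2:ℝ)| * (2 * π) := by
          have h5 := mul_le_mul_of_nonneg_right h1 (by positivity : (0:ℝ) ≤ 2 * π)
          linarith
        linarith [pi_gt_three]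
      rw [hn20] at hn2
      simp at hn2
      linarith
    · -- cos case
      obtain ⟨n, hn⟩ := Real.cos_eq_zero_iff.1 hc
      have hexp : M * (θ - A) = M * θ - M * A := by ring
      have hn' : (n:ℝ) * π = (k:ℝ) * π + (t - M * (θ - A)) := by
        have h1 : (2 * (n:ℝ) + 1) * π / 2 = (n:ℝ) * π + π / 2 := by ring
        rw [h1] at hn
        rw [htdef] at *
        linarith [hkR]
      have hnk : n = k := by
        refine int_pin n k _ hn' ?_
        have h1 : |t - M * (θ - A)| ≤ |t| + M * (θ - A) := by
          have := abs_sub t (M * (θ - A))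
          rw [abs_of_nonneg hMD0] at this
          exact this
        have h2 : |t| < π / 4 := lt_of_lt_of_le hφ hε4
        calc |t - M * (θ - A)| ≤ |t| + M * (θ - A) := h1
          _ < π / 4 + π / 8 := by linarith
          _ < π := by linarith [pi_gt_three]
      rw [hnk] at hn'
      push_cast at hn'
      have ht' : t = M * (θ - A) := by linarith
      have ht0 : 0 ≤ t := by rw [ht']; exact hMD0
      have h8 : t ≤ |t| / 2 := le_trans (le_of_eq ht') hKB1
      rw [abs_of_nonneg ht0] at h8
      have htz : t = 0 := by linarith
      rw [htdef] at htz
      linarith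
  · -- backward: φ = π/2 implies equation
    intro h
    rw [hAdef, h, Real.sin_pi_div_two, mul_one, harc]
    have h2 : π / 2 + 2 * M * θ = π / 2 + (k:ℤ) * (2 * π) := by
      push_cast
      linarith [hkR]
    rw [h2, Real.sin_add_int_mul_two_pi, Real.sin_pi_div_two]
end
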